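/- Let V be a finite-dimensional complex vector space with dim V = n and let N : V → V be of hook type with parameters (n, b): N^b = 0, N^{b−1} ≠ 0, and dim(im N) = b − 1. Let i_1 < i_2 < ⋯ < i_{b−1} and i'_1 < i'_2 < ⋯ < i'_{b−1} be two strictly increasing sequences of integers in {1, …, n−1}, and set i_b = i'_b = n. Then there exists a complete flag F(0) ⊂ ⋯ ⊂ F(n) in V fixed by N satisfying both im N^{b−j} ⊆ F(i_j) ⊆ ker N^j and im N^{b−j} ⊆ F(i'_j) ⊆ ker N^j for all 1 ≤ j ≤ b − 1, if and only if max(i_j, i'_j) < min(i_{j+1}, i'_{j+1}) for all 1 ≤ j ≤ b − 1. -/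

import Mathlib

/-!
In the hook case the ranks of the powers of `N` drop by exactly one, `rank N^m = b - m` for
`1 ≤ m ≤ b`, so `range N^(b-a)` is spanned by the last `a` vectors of the long Jordan chain, and
`ker N = range N^(b-1) ⊕ W`.

Necessity: if `i'_(j+1) ≤ i_j`, then `range N^(b-j-1) ⊆ F(i'_(j+1)) ⊆ F(i_j) ⊆ ker N^j`, i.e.
`N^(b-1) = 0`.

Sufficiency: put `s_j = min (i_j, i'_j)`, so `s_b = n`, and let `F(k)` be spanned by the first
`a(k) = #{j ∈ [1, b] | s_j ≤ k}` chain vectors, i.e. `range N^(b - a(k))`, and by `k - a(k)`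
vectors of a flag in `W`. Then `range N^(b-j) ⊆ F(k) ⊆ ker N^j` as soon as `s_j ≤ k < s_(j+1)`,
and by the hypothesis `max < min` this window contains both `i_j` and `i'_j`.
-/

open Module LinearMap Submodule

theorem Nat.add_sub_le_of_lt_succ {s : ℕ → ℕ} {j l : ℕ}
    (hs : ∀ m, j ≤ m → m < l → s m < s (m + 1)) (hjl : j ≤ l) : s j + (l - j) ≤ s l := by
  induction l, hjl using Nat.le_induction with
  | base => simp
  | succ l hjl ih =>
    have := ih fun m h₁ h₂ => hs m h₁ (by omega)
    have := hs l hjl (by omega)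
    omega

theorem Nat.add_sub_le_of_succ_lt {r : ℕ → ℕ} {j l : ℕ}
    (hr : ∀ m, j ≤ m → m < l → r (m + 1) < r m) (hjl : j ≤ l) : r l + (l - j) ≤ r j := by
  induction l, hjl using Nat.le_induction with
  | base => simp
  | succ l hjl ih =>
    have := ih fun m h₁ h₂ => hr m h₁ (by omega)
    have := hr l hjl (by omega)
    omega

/-- `a k` is the number of vectors of the long Jordan chain among the first `k` vectors of a
flag adapted to a hook of arm length `b` in dimension `n`. -/
structure IsFlagSchedule (n b : ℕ) (a : ℕ → ℕ) : Prop where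
  mono : Monotone a
  succ_le : ∀ k, a (k + 1) ≤ a k + 1
  le_self : ∀ k, a k ≤ k
  sub_le : ∀ k ≤ n, k - a k ≤ n - b
  lt : ∀ k < n, a k < b

def countLE (s : ℕ → ℕ) (b k : ℕ) : ℕ :=
  ((Finset.Icc 1 b).filter (s · ≤ k)).card

section CountLE

variable {s : ℕ → ℕ} {n b j k : ℕ}

theorem countLE_mono : Monotone (countLE s b) := fun _ _ h =>
  Finset.card_le_card fun _ => by
    simp only [Finset.mem_filter]
    exact And.imp_right fun hj => hj.trans h

theorem countLE_le : countLE s b k ≤ b :=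
  (Finset.card_filter_le _ _).trans (by simp)

theorem le_countLE (hs : ∀ j, 1 ≤ j → j < b → s j < s (j + 1)) (hjb : j ≤ b) (hk : s j ≤ k) :
    j ≤ countLE s b k := by
  have hsub : Finset.Icc 1 j ⊆ (Finset.Icc 1 b).filter (s · ≤ k) := fun l hl => by
    simp only [Finset.mem_Icc, Finset.mem_filter] at hl ⊢
    have := Nat.add_sub_le_of_lt_succ (fun m h₁ h₂ => hs m (by omega) (by omega)) hl.2
    omega
  simpa [countLE] using Finset.card_le_card hsub

theorem countLE_le_of_lt (hs : ∀ j, 1 ≤ j → j < b → s j < s (j + 1)) (hk : k < s (j + 1)) :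
    countLE s b k ≤ j := by
  have hsub : (Finset.Icc 1 b).filter (s · ≤ k) ⊆ Finset.Icc 1 j := fun l hl => by
    simp only [Finset.mem_Icc, Finset.mem_filter] at hl ⊢
    refine ⟨hl.1.1, not_lt.1 fun hjl => ?_⟩
    have := Nat.add_sub_le_of_lt_succ (j := j + 1) (l := l)
      (fun m h₁ h₂ => hs m (by omega) (by omega)) hjl
    omega
  simpa [countLE] using Finset.card_le_card hsub

theorem countLE_succ_le (hs : ∀ j, 1 ≤ j → j < b → s j < s (j + 1)) :
    countLE s b (k + 1) ≤ countLE s b k + 1 := by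
  by_contra! hlt
  have hcb : countLE s b k + 1 < b := hlt.trans_le countLE_le
  have hk : k < s (countLE s b k + 1) := not_le.1 fun h => by
    have := le_countLE hs (by omega) h
    omega
  have hk' : k + 1 < s (countLE s b k + 1 + 1) := by
    have := hs (countLE s b k + 1) (by omega) (by omega)
    omega
  have := countLE_le_of_lt hs hk'
  omega

theorem isFlagSchedule_countLE (hs : ∀ j, 1 ≤ j → j < b → s j < s (j + 1)) (hs1 : 0 < s 1)
    (hsb : s b = n) (hb : 0 < b) : IsFlagSchedule n b (countLE s b) where
  mono := countLE_mono
  succ_le _ := countLE_succ_le hs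
  le_self k := by
    rcases Nat.lt_or_ge k b with hk | hk
    · refine countLE_le_of_lt hs ?_
      have := Nat.add_sub_le_of_lt_succ (fun m h₁ h₂ => hs m h₁ (by omega))
        (show 1 ≤ k + 1 by omega)
      omega
    · exact countLE_le.trans hk
  sub_le k hk := by
    have hsn := Nat.add_sub_le_of_lt_succ (fun m h₁ h₂ => hs m h₁ h₂) hb
    rcases Nat.lt_or_ge (n - b) k with hk' | hk'
    · have := Nat.add_sub_le_of_lt_succ (j := k - (n - b)) (l := b)
        (fun m h₁ h₂ => hs m (by omega) h₂) (by omega)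
      have := le_countLE hs (j := k - (n - b)) (k := k) (by omega) (by omega)
      omega
    · omega
  lt k hk :=
    (countLE_le_of_lt hs (j := b - 1) (by rwa [Nat.sub_add_cancel hb, hsb])).trans_lt
      (by omega)

end CountLE

section LinearAlgebra

variable {K V : Type*} [Field K] [AddCommGroup V] [Module K V]

theorem range_pow_le_range_pow (N : V →ₗ[K] V) {m l : ℕ} (h : m ≤ l) :
    range (N ^ l) ≤ range (N ^ m) :=
  N.iterateRange.monotone h

theorem map_range_pow (N : V →ₗ[K] V) (m : ℕ) :
    (range (N ^ m)).map N = range (N ^ (m + 1)) := by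
  rw [pow_succ', Module.End.mul_eq_comp, range_comp]

theorem range_pow_le_ker_pow_iff (N : V →ₗ[K] V) {m j : ℕ} :
    range (N ^ m) ≤ ker (N ^ j) ↔ N ^ (j + m) = 0 := by
  rw [range_le_ker_iff, pow_add, Module.End.mul_eq_comp]

theorem lt_of_le_ker_pow_of_range_pow_le {N : V →ₗ[K] V} {F : ℕ → Submodule K V}
    {n b j k l : ℕ} (hNb1 : N ^ (b - 1) ≠ 0) (hF : ∀ k < n, F k ≤ F (k + 1)) (hjb : j < b)
    (hkn : k ≤ n) (hker : F k ≤ ker (N ^ j)) (hrange : range (N ^ (b - (j + 1))) ≤ F l) :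
    k < l := by
  by_contra! hlk
  have hFlk : F l ≤ F k :=
    monotoneOn_of_le_succ Set.ordConnected_Iic (fun m _ _ hm => hF m (by simpa using hm))
      (Set.mem_Iic.2 (hlk.trans hkn)) (Set.mem_Iic.2 hkn) hlk
  have := (range_pow_le_ker_pow_iff N).1 (hrange.trans (hFlk.trans hker))
  rw [show j + (b - (j + 1)) = b - 1 by omega] at this
  exact hNb1 this

section HookFlag

variable {N : V →ₗ[K] V} {b j k : ℕ} {G : ℕ → Submodule K V} {a : ℕ → ℕ}

def hookFlag (N : V →ₗ[K] V) (b : ℕ) (G : ℕ → Submodule K V) (a : ℕ → ℕ) (k : ℕ) :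
    Submodule K V :=
  range (N ^ (b - a k)) ⊔ G (k - a k)

theorem hookFlag_le_succ (hG : Monotone G) (ha : a k ≤ a (k + 1)) (ha' : a (k + 1) ≤ a k + 1) :
    hookFlag N b G a k ≤ hookFlag N b G a (k + 1) :=
  sup_le_sup (range_pow_le_range_pow N (by omega)) (hG (by omega))

theorem map_hookFlag_succ_le (hG : ∀ m, G m ≤ ker N) (ha : a (k + 1) ≤ a k + 1) :
    (hookFlag N b G a (k + 1)).map N ≤ hookFlag N b G a k := by
  rw [hookFlag, Submodule.map_sup, map_range_pow, le_ker_iff_map.1 (hG _), sup_bot_eq]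
  exact (range_pow_le_range_pow N (by omega)).trans le_sup_left

theorem range_pow_le_hookFlag (h : j ≤ a k) : range (N ^ (b - j)) ≤ hookFlag N b G a k :=
  (range_pow_le_range_pow N (by omega)).trans le_sup_left

theorem hookFlag_le_ker_pow (hNb : N ^ b = 0) (hG : ∀ m, G m ≤ ker N) (hj : 1 ≤ j)
    (h : a k ≤ j) : hookFlag N b G a k ≤ ker (N ^ j) := by
  refine sup_le ((range_pow_le_ker_pow_iff N).2 (pow_eq_zero_of_le (by omega) hNb)) ?_
  exact (hG _).trans (by simpa using N.iterateKer.monotone hj)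

theorem hookFlag_eq_top (h : b ≤ a k) : hookFlag N b G a k = ⊤ := by
  rw [hookFlag, Nat.sub_eq_zero_of_le h, pow_zero, Module.End.one_eq_id, range_id, top_sup_eq]

end HookFlag

variable [FiniteDimensional K V]

theorem finrank_map_add_finrank_inf_ker {V₂ : Type*} [AddCommGroup V₂] [Module K V₂]
    (f : V →ₗ[K] V₂) (p : Submodule K V) :
    finrank K (p.map f) + finrank K ↥(p ⊓ ker f) = finrank K p := by
  have h := finrank_range_add_finrank_ker (f.domRestrict p)
  rwa [range_domRestrict, ker_domRestrict, ← finrank_map_subtype_eq, map_comap_subtype] at h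

theorem exists_le_disjoint_finrank_add (p q : Submodule K V) :
    ∃ W ≤ p, Disjoint W q ∧ finrank K W + finrank K ↥(p ⊓ q) = finrank K p := by
  obtain ⟨W, hW⟩ := (q.comap p.subtype).exists_isCompl
  refine ⟨W.map p.subtype, map_subtype_le p W, ?_, ?_⟩
  · rw [disjoint_def]
    rintro _ ⟨y, hy, rfl⟩ hyq
    simp [disjoint_def.1 hW.disjoint y hyq hy]
  · rw [finrank_map_subtype_eq, ← map_comap_subtype, finrank_map_subtype_eq, add_comm]
    exact finrank_add_eq_of_isCompl hW

theorem exists_monotone_le_finrank_eq (W : Submodule K V) :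
    ∃ G : ℕ → Submodule K V, Monotone G ∧ (∀ m, G m ≤ W) ∧
      ∀ m ≤ finrank K W, finrank K (G m) = m := by
  let e : Fin (finrank K W) → V := W.subtype ∘ Module.finBasis K W
  have he : LinearIndependent K e :=
    (Module.finBasis K W).linearIndependent.map' _ W.ker_subtype
  refine ⟨fun m => span K (Set.range fun i : Fin (min m (finrank K W)) =>
    e (Fin.castLE (min_le_right _ _) i)), ?_, ?_, ?_⟩
  · intro m m' h
    apply span_mono
    rintro _ ⟨i, rfl⟩
    exact ⟨Fin.castLE (min_le_min_right _ h) i, rfl⟩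
  · intro m
    rw [span_le]
    rintro _ ⟨i, rfl⟩
    exact (Module.finBasis K W _).2
  · intro m hm
    refine (finrank_span_eq_card (he.comp _ (Fin.castLE_injective _))).trans ?_
    rw [Fintype.card_fin]
    omega

section Hook

variable {N : V →ₗ[K] V} {b : ℕ}

theorem finrank_range_pow_succ_lt (hNb : N ^ b = 0) (hNb1 : N ^ (b - 1) ≠ 0) {m : ℕ}
    (hm : m < b) : finrank K (range (N ^ (m + 1))) < finrank K (range (N ^ m)) := by
  have hle : range (N ^ (b - 1)) ≤ range (N ^ m) ⊓ ker N := by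
    refine le_inf (range_pow_le_range_pow N (by omega)) ?_
    rw [range_le_ker_iff, ← Module.End.mul_eq_comp, ← pow_succ', Nat.sub_add_cancel (by omega)]
    exact hNb
  have hpos : 0 < finrank K ↥(range (N ^ m) ⊓ ker N) :=
    (Nat.pos_of_ne_zero fun h => hNb1 (range_eq_bot.1 (Submodule.finrank_eq_zero.1 h))).trans_le
      (finrank_mono hle)
  have := finrank_map_add_finrank_inf_ker N (range (N ^ m))
  rw [map_range_pow] at this
  omega

theorem le_finrank_of_pow_eq_zero_of_pow_ne_zero (hNb : N ^ b = 0) (hNb1 : N ^ (b - 1) ≠ 0) :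
    b ≤ finrank K V := by
  have := Nat.add_sub_le_of_succ_lt (r := fun m => finrank K (range (N ^ m)))
    (fun m _ hm => finrank_range_pow_succ_lt hNb hNb1 hm) (Nat.zero_le b)
  rwa [hNb, range_zero, finrank_bot, zero_add, pow_zero, Module.End.one_eq_id, range_id,
    finrank_top] at this

theorem finrank_range_pow_of_hook (hNb : N ^ b = 0) (hNb1 : N ^ (b - 1) ≠ 0)
    (hrank : finrank K (range N) = b - 1) {m : ℕ} (hm : 1 ≤ m) (hmb : m ≤ b) :
    finrank K (range (N ^ m)) = b - m := by
  have hdrop := fun l (_ : 1 ≤ l) hl => finrank_range_pow_succ_lt (m := l) hNb hNb1 hl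
  have hle := Nat.add_sub_le_of_succ_lt (r := fun m => finrank K (range (N ^ m)))
    (fun l h₁ h₂ => hdrop l (by omega) (by omega)) hm
  have hge := Nat.add_sub_le_of_succ_lt (r := fun m => finrank K (range (N ^ m)))
    (fun l h₁ h₂ => hdrop l (by omega) h₂) hmb
  rw [pow_one, hrank] at hle
  rw [hNb, range_zero, finrank_bot] at hge
  omega

theorem exists_le_ker_disjoint_range_of_hook (hNb : N ^ b = 0) (hNb1 : N ^ (b - 1) ≠ 0)
    (hrank : finrank K (range N) = b - 1) :
    ∃ W ≤ ker N, Disjoint W (range N) ∧ finrank K V - b ≤ finrank K W := by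
  obtain ⟨W, hWker, hWdisj, hW⟩ := exists_le_disjoint_finrank_add (ker N) (range N)
  refine ⟨W, hWker, hWdisj, ?_⟩
  have hinf : finrank K ↥(range N ⊓ ker N) ≤ 1 := by
    have := finrank_map_add_finrank_inf_ker N (range (N ^ 1))
    rw [map_range_pow, pow_one] at this
    rcases Nat.lt_or_ge b 2 with hb | hb
    · omega
    · rw [finrank_range_pow_of_hook hNb hNb1 hrank (by omega) hb, hrank] at this
      omega
  have := finrank_range_add_finrank_ker N
  have hb : b ≠ 0 := by rintro rfl; exact hNb1 hNb
  rw [inf_comm] at hinf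
  omega

theorem finrank_hookFlag {G : ℕ → Submodule K V} {a : ℕ → ℕ} {k : ℕ} (hNb : N ^ b = 0)
    (hNb1 : N ^ (b - 1) ≠ 0) (hrank : finrank K (range N) = b - 1)
    (hG : ∀ m, Disjoint (G m) (range N)) (hGk : finrank K (G (k - a k)) = k - a k)
    (hab : a k < b) (hak : a k ≤ k) : finrank K (hookFlag N b G a k) = k := by
  have hdisj : Disjoint (range (N ^ (b - a k))) (G (k - a k)) :=
    ((hG _).mono_right ((range_pow_le_range_pow N (m := 1) (by omega)).trans_eq
      (by rw [pow_one]))).symm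
  rw [hookFlag, ← add_zero (finrank K _), ← finrank_bot K V, ← hdisj.eq_bot,
    finrank_sup_add_finrank_inf_eq, hGk, finrank_range_pow_of_hook hNb hNb1 hrank (by omega)
    (by omega)]
  omega

theorem exists_fixed_flag_of_hook {n : ℕ} {a : ℕ → ℕ} (hn : finrank K V = n)
    (hNb : N ^ b = 0) (hNb1 : N ^ (b - 1) ≠ 0) (hrank : finrank K (range N) = b - 1)
    (ha : IsFlagSchedule n b a) :
    ∃ F : ℕ → Submodule K V, (∀ k ≤ n, finrank K (F k) = k) ∧ (∀ k < n, F k ≤ F (k + 1)) ∧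
      (∀ k, 1 ≤ k → k ≤ n → (F k).map N ≤ F (k - 1)) ∧
      (∀ j k, j ≤ a k → range (N ^ (b - j)) ≤ F k) ∧
      (∀ j k, 1 ≤ j → a k ≤ j → F k ≤ ker (N ^ j)) := by
  obtain ⟨W, hWker, hWdisj, hW⟩ := exists_le_ker_disjoint_range_of_hook hNb hNb1 hrank
  obtain ⟨G, hGmono, hGW, hGrank⟩ := exists_monotone_le_finrank_eq W
  have hGker : ∀ m, G m ≤ ker N := fun m => (hGW m).trans hWker
  refine ⟨hookFlag N b G a, fun k hk => ?_,
    fun k _ => hookFlag_le_succ hGmono (ha.mono k.le_succ) (ha.succ_le k), ?_,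
    fun _ _ => range_pow_le_hookFlag, fun _ _ => hookFlag_le_ker_pow hNb hGker⟩
  · rcases Nat.lt_or_ge (a k) b with hab | hab
    · have := ha.sub_le k hk
      exact finrank_hookFlag hNb hNb1 hrank (fun m => hWdisj.mono_left (hGW m))
        (hGrank _ (by omega)) hab (ha.le_self k)
    · have := ha.lt k
      rw [hookFlag_eq_top hab, finrank_top, hn]
      omega
  · intro k hk1 _
    obtain ⟨k, rfl⟩ : ∃ k', k = k' + 1 := ⟨k - 1, by omega⟩
    rw [Nat.add_sub_cancel]
    exact map_hookFlag_succ_le hGker (ha.succ_le k)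

end Hook

end LinearAlgebra

/-- Nonemptiness criterion for the intersection of two hook-type Springer fiber
components: for a hook-type nilpotent `N` and two strictly increasing sequences
`i_1 < ⋯ < i_(b-1)` and `i'_1 < ⋯ < i'_(b-1)` in `{1, …, n-1}` with `i_b = i'_b = n`,
there is a complete flag fixed by `N` satisfying
`im N^(b-j) ⊆ F(i_j) ⊆ ker N^j` and `im N^(b-j) ⊆ F(i'_j) ⊆ ker N^j` for all
`1 ≤ j ≤ b - 1` iff `max (i_j) (i'_j) < min (i_(j+1)) (i'_(j+1))` for all
`1 ≤ j ≤ b - 1`. -/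
theorem hook_components_intersection_nonempty_iff {V : Type*} [AddCommGroup V]
    [Module ℂ V] [FiniteDimensional ℂ V] (n b : ℕ) (hn : Module.finrank ℂ V = n)
    (N : V →ₗ[ℂ] V) (hNb : N ^ b = 0) (hNb1 : N ^ (b - 1) ≠ 0)
    (hrank : Module.finrank ℂ (LinearMap.range N) = b - 1)
    (i i' : ℕ → ℕ)
    (hi : ∀ j : ℕ, 1 ≤ j → j ≤ b - 1 → 1 ≤ i j ∧ i j ≤ n - 1)
    (hi' : ∀ j : ℕ, 1 ≤ j → j ≤ b - 1 → 1 ≤ i' j ∧ i' j ≤ n - 1)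
    (hmono : ∀ j : ℕ, 1 ≤ j → j + 1 ≤ b - 1 → i j < i (j + 1))
    (hmono' : ∀ j : ℕ, 1 ≤ j → j + 1 ≤ b - 1 → i' j < i' (j + 1))
    (hib : i b = n) (hib' : i' b = n) :
    (∃ F : ℕ → Submodule ℂ V,
      (∀ k : ℕ, k ≤ n → Module.finrank ℂ (F k) = k) ∧
      (∀ k : ℕ, k < n → F k ≤ F (k + 1)) ∧
      (∀ k : ℕ, 1 ≤ k → k ≤ n → (F k).map N ≤ F (k - 1)) ∧
      (∀ j : ℕ, 1 ≤ j → j ≤ b - 1 →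
        (LinearMap.range (N ^ (b - j)) ≤ F (i j) ∧ F (i j) ≤ LinearMap.ker (N ^ j)) ∧
        (LinearMap.range (N ^ (b - j)) ≤ F (i' j) ∧ F (i' j) ≤ LinearMap.ker (N ^ j)))) ↔
    (∀ j : ℕ, 1 ≤ j → j ≤ b - 1 →
      max (i j) (i' j) < min (i (j + 1)) (i' (j + 1))) := by
  have hb : 0 < b := Nat.pos_of_ne_zero (by rintro rfl; exact hNb1 hNb)
  constructor
  · rintro ⟨F, -, hF, -, hsand⟩ j hj1 hjb
    have := hi j hj1 hjb
    have := hi' j hj1 hjb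
    rcases (show j < b - 1 ∨ j = b - 1 by omega) with hj | rfl
    · have h₁ : i j < i' (j + 1) := lt_of_le_ker_pow_of_range_pow_le hNb1 hF (by omega)
        (by omega) (hsand j hj1 hjb).1.2 (hsand (j + 1) (by omega) (by omega)).2.1
      have h₂ : i' j < i (j + 1) := lt_of_le_ker_pow_of_range_pow_le hNb1 hF (by omega)
        (by omega) (hsand j hj1 hjb).2.2 (hsand (j + 1) (by omega) (by omega)).1.1
      have := hmono j hj1 (by omega)
      have := hmono' j hj1 (by omega)
      omega
    · rw [Nat.sub_add_cancel hb, hib, hib']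
      omega
  · intro h
    set s : ℕ → ℕ := fun j => min (i j) (i' j)
    have hs : ∀ j, 1 ≤ j → j < b → s j < s (j + 1) := fun j h₁ h₂ =>
      min_le_max.trans_lt (h j h₁ (by omega))
    have hs1 : 0 < s 1 := by
      rcases (show 1 < b ∨ b = 1 by omega) with hb1 | rfl
      · exact lt_min (hi 1 le_rfl (by omega)).1 (hi' 1 le_rfl (by omega)).1
      · simpa [s, hib, hib', ← hn] using
          hb.trans_le (le_finrank_of_pow_eq_zero_of_pow_ne_zero hNb hNb1)
    obtain ⟨F, hdim, hstep, hfix, hlow, hhigh⟩ := exists_fixed_flag_of_hook hn hNb hNb1 hrank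
      (isFlagSchedule_countLE hs hs1 (by simp [s, hib, hib']) hb)
    refine ⟨F, hdim, hstep, hfix, fun j hj1 hjb => ?_⟩
    have hsand : ∀ k, s j ≤ k → k < s (j + 1) →
        range (N ^ (b - j)) ≤ F k ∧ F k ≤ ker (N ^ j) := fun k h₁ h₂ =>
      ⟨hlow j k (le_countLE hs (by omega) h₁), hhigh j k hj1 (countLE_le_of_lt hs h₂)⟩
    exact ⟨hsand _ (min_le_left _ _) ((le_max_left _ _).trans_lt (h j hj1 hjb)),
      hsand _ (min_le_right _ _) ((le_max_right _ _).trans_lt (h j hj1 hjb))⟩
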